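/- arXiv:1808.06062 — 4 statements merged into one kernel-verified Lean document; each statement's English description precedes it below -/
import Mathlib

section
/- For positive integers $t_0, t_1$, the integral $\int_0^1 \beta(p; t_0, t_1) H_2(p)\, dp$ equals $\frac{\log_2 e}{t_0+t_1}\big((t_0+t_1) H_{t_0+t_1} - t_0 H_{t_0} - t_1 H_{t_1}\big)$, where $\beta(p;t_0,t_1) = \frac{(t_0+t_1-1)!}{(t_0-1)!(t_1-1)!} p^{t_0-1}(1-p)^{t_1-1}$ is the Beta$(t_0,t_1)$ density, $H_2$ is the binary entropy function, and $H_m = \sum_{i=1}^m 1/i$ is the $m$th harmonic number. -/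
open Real Finset

/-- Binary entropy function (base 2). -/
noncomputable def binEnt (x : ℝ) : ℝ := -x * Real.logb 2 x - (1 - x) * Real.logb 2 (1 - x)

/-- The `m`th harmonic number. -/
noncomputable def harmonic' (m : ℕ) : ℝ := ∑ i ∈ Finset.range m, (1 : ℝ) / (i + 1)

/-- The Beta(t0, t1) probability density function. -/
noncomputable def betaPdf (t0 t1 : ℕ) (p : ℝ) : ℝ :=
  ((t0 + t1 - 1).factorial : ℝ) / ((t0 - 1).factorial * (t1 - 1).factorial) *
    p ^ (t0 - 1) * (1 - p) ^ (t1 - 1)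

/-!
Write `binEnt p = (negMulLog p + negMulLog (1 - p)) / log 2`. By the symmetry `p ↦ 1 - p` of the
Beta density it suffices to know the moments `J a b = ∫₀¹ x^a (1-x)^b negMulLog x`. Since
`(1-x)^(b+1) = (1-x)^b - x (1-x)^b`, they satisfy `J a (b+1) = J a b - J (a+1) b`, and
`J a 0 = 1/(a+2)^2` by an explicit antiderivative; the closed form
`(a+1)! b! / (a+b+2)! * (H_{a+b+2} - H_{a+1})` satisfies the same recursion.
-/

open scoped Nat

lemma harmonic'_succ (n : ℕ) : harmonic' (n + 1) = harmonic' n + 1 / ((n : ℝ) + 1) := by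
  simp [harmonic', sum_range_succ]

lemma binEnt_eq_negMulLog_add_negMulLog_one_sub_div_log_two (p : ℝ) :
    binEnt p = (negMulLog p + negMulLog (1 - p)) / log 2 := by
  simp only [binEnt, negMulLog, logb]
  ring

lemma integral_pow_mul_negMulLog (n : ℕ) :
    ∫ x in (0 : ℝ)..1, x ^ n * negMulLog x = 1 / ((n : ℝ) + 2) ^ 2 := by
  have hn : (n : ℝ) + 2 ≠ 0 := by positivity
  let F : ℝ → ℝ := fun x ↦ x ^ (n + 1) * negMulLog x / (n + 2) + x ^ (n + 2) / (n + 2) ^ 2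
  have hderiv : ∀ x ∈ Set.Ioo (0 : ℝ) 1, HasDerivAt F (x ^ n * negMulLog x) x := by
    intro x hx
    have h := (((hasDerivAt_pow (n + 1) x).mul (hasDerivAt_negMulLog hx.1.ne')).div_const
      ((n : ℝ) + 2)).add ((hasDerivAt_pow (n + 2) x).div_const (((n : ℝ) + 2) ^ 2))
    refine (h : HasDerivAt F _ x).congr_deriv ?_
    simp only [negMulLog, Nat.add_sub_cancel, show n + 2 - 1 = n + 1 by omega]
    field_simp
    push_cast
    ring
  rw [intervalIntegral.integral_eq_sub_of_hasDerivAt_of_le zero_le_one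
    (by fun_prop) hderiv (by apply Continuous.intervalIntegrable; fun_prop)]
  simp [F]

/-- Closed form of `∫₀¹ x^a (1-x)^b negMulLog x`. -/
noncomputable def negMulLogBetaMoment (a b : ℕ) : ℝ :=
  (a + 1)! * b ! / (a + b + 2)! * (harmonic' (a + b + 2) - harmonic' (a + 1))

lemma negMulLogBetaMoment_zero_right (a : ℕ) :
    negMulLogBetaMoment a 0 = 1 / ((a : ℝ) + 2) ^ 2 := by
  have ha : (a : ℝ) + 2 ≠ 0 := by positivity
  simp only [negMulLogBetaMoment, add_zero, harmonic'_succ (a + 1), Nat.factorial_succ (a + 1)]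
  push_cast
  field_simp
  ring

lemma negMulLogBetaMoment_succ_right (a b : ℕ) :
    negMulLogBetaMoment a (b + 1) = negMulLogBetaMoment a b - negMulLogBetaMoment (a + 1) b := by
  simp only [negMulLogBetaMoment, show a + 1 + b + 2 = a + b + 2 + 1 by omega,
    show a + (b + 1) + 2 = a + b + 2 + 1 by omega, harmonic'_succ (a + b + 2),
    harmonic'_succ (a + 1), Nat.factorial_succ (a + b + 2), Nat.factorial_succ (a + 1),
    Nat.factorial_succ b]
  have h1 : (a : ℝ) + 1 + 1 ≠ 0 := by positivity
  have h2 : (a : ℝ) + b + 2 + 1 ≠ 0 := by positivity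
  push_cast
  field_simp
  ring

lemma integral_pow_mul_one_sub_pow_mul_negMulLog (a b : ℕ) :
    ∫ x in (0 : ℝ)..1, x ^ a * (1 - x) ^ b * negMulLog x = negMulLogBetaMoment a b := by
  induction b generalizing a with
  | zero => simpa [negMulLogBetaMoment_zero_right] using integral_pow_mul_negMulLog a
  | succ b ih =>
    have hsplit : ∀ x : ℝ, x ^ a * (1 - x) ^ (b + 1) * negMulLog x =
        x ^ a * (1 - x) ^ b * negMulLog x - x ^ (a + 1) * (1 - x) ^ b * negMulLog x := by
      intro x; ring
    simp_rw [hsplit]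
    rw [intervalIntegral.integral_sub (by apply Continuous.intervalIntegrable; fun_prop)
      (by apply Continuous.intervalIntegrable; fun_prop), ih, ih,
      negMulLogBetaMoment_succ_right]

lemma negMulLogBetaMoment_add_swap (a c : ℕ) :
    (a + c + 1)! / (a ! * c !) * (negMulLogBetaMoment a c + negMulLogBetaMoment c a) =
      ((a + c + 2) * harmonic' (a + c + 2) - (a + 1) * harmonic' (a + 1)
        - (c + 1) * harmonic' (c + 1)) / ((a : ℝ) + c + 2) := by
  simp only [negMulLogBetaMoment, show c + a + 2 = a + c + 2 by omega,
    Nat.factorial_succ (a + c + 1), Nat.factorial_succ a, Nat.factorial_succ c]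
  have h : (a : ℝ) + c + 2 ≠ 0 := by positivity
  push_cast
  field_simp
  ring

theorem capacity_noiseless_end_duplication (t0 t1 : ℕ) (ht0 : 1 ≤ t0) (ht1 : 1 ≤ t1) :
    ∫ p in (0:ℝ)..1, betaPdf t0 t1 p * binEnt p =
      Real.logb 2 (Real.exp 1) / (t0 + t1) *
        ((t0 + t1) * harmonic' (t0 + t1) - t0 * harmonic' t0 - t1 * harmonic' t1) := by
  obtain ⟨a, rfl⟩ : ∃ a, t0 = a + 1 := ⟨t0 - 1, by omega⟩
  obtain ⟨c, rfl⟩ : ∃ c, t1 = c + 1 := ⟨t1 - 1, by omega⟩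
  set C : ℝ := (a + c + 1)! / (a ! * c !)
  have hpointwise : ∀ p : ℝ, betaPdf (a + 1) (c + 1) p * binEnt p = C / log 2 *
      (p ^ a * (1 - p) ^ c * negMulLog p + (1 - p) ^ c * (1 - (1 - p)) ^ a * negMulLog (1 - p)) := by
    intro p
    simp only [betaPdf, binEnt_eq_negMulLog_add_negMulLog_one_sub_div_log_two,
      show a + 1 + (c + 1) - 1 = a + c + 1 by omega, Nat.add_sub_cancel, sub_sub_cancel, C]
    ring
  have hreflect : ∫ p in (0 : ℝ)..1, (1 - p) ^ c * (1 - (1 - p)) ^ a * negMulLog (1 - p) =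
      negMulLogBetaMoment c a := by
    rw [intervalIntegral.integral_comp_sub_left (fun u ↦ u ^ c * (1 - u) ^ a * negMulLog u),
      sub_zero, sub_self, integral_pow_mul_one_sub_pow_mul_negMulLog]
  simp_rw [hpointwise]
  rw [intervalIntegral.integral_const_mul, intervalIntegral.integral_add
    (by apply Continuous.intervalIntegrable; fun_prop)
    (by apply Continuous.intervalIntegrable; fun_prop),
    integral_pow_mul_one_sub_pow_mul_negMulLog, hreflect, logb, log_exp, div_mul_eq_mul_div,
    negMulLogBetaMoment_add_swap, show a + 1 + (c + 1) = a + c + 2 by omega]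
  push_cast
  ring
end

section
/- Define the signature of a permutation $\pi$ of $[n+1]$ as the binary string $u \in \{0,1\}^n$ with $u_i = 1$ if $\pi_i < \pi_{i+1}$ and $u_i = 0$ otherwise. For a binary string $u$ of length $n$, let $T_u$ be the set of positions $i \in [n+1]$ such that ($i = 1$ or $u_{i-1} = 1$) and ($i = n+1$ or $u_i = 0$). Then the number of permutations of $[n+1]$ with signature $u$ satisfies the recursion $|\Sigma_u| = \sum_{i \in T_u} \binom{n}{i-1} |\Sigma_{u_1^{i-2}}| \cdot |\Sigma_{u_{i+1}^n}|$, where $u_1^{i-2}$ and $u_{i+1}^n$ denote the indicated (possibly empty) substrings. -/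
/-!
Write a permutation as the word of its values and split it at the largest letter,
`w = w₁ ++ m :: w₂`. Its signature is that of `w₁`, an ascent (if `w₁ ≠ []`), a descent
(if `w₂ ≠ []`), and that of `w₂`; so the position `i = w₁.length + 1` of `m` lies in `T_u`, and
`w₁`, `w₂` have signatures `u_1^{i-2}` and `u_{i+1}^n`. Conversely, an `(i-1)`-subset `A` of the
other letters, a word on `A` and a word on its complement with these signatures glue back to such
a `w`. The number of words on a `k`-set with a given signature depends only on `k`, whence the
term `C(n, i-1) |Σ_{u_1^{i-2}}| |Σ_{u_{i+1}^n}|`.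
-/

/-- The number of permutations of `[n+1]` (with `n = u.length`) whose signature is the
binary string `u`: position `i` of the signature is `1` (here `true`) iff the permutation
ascends from position `i` to position `i+1`. -/
noncomputable def sigCount (u : List Bool) : ℕ :=
  Nat.card {π : Equiv.Perm (Fin (u.length + 1)) //
    ∀ i : Fin u.length, (u.get i = true ↔ π i.castSucc < π i.succ)}

namespace List

variable {α β : Type*} [LinearOrder α]

def signature : List α → List Bool
  | a :: b :: l => decide (a < b) :: signature (b :: l)
  | _ => []

@[simp] theorem signature_nil : signature ([] : List α) = [] := rfl

@[simp] theorem signature_singleton (a : α) : signature [a] = [] := rfl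

@[simp] theorem signature_cons_cons (a b : α) (l : List α) :
    signature (a :: b :: l) = decide (a < b) :: signature (b :: l) := rfl

@[simp] theorem length_signature : ∀ l : List α, l.signature.length = l.length - 1
  | [] | [_] => rfl
  | _ :: b :: l => by simp [length_signature (b :: l)]

theorem signature_map [LinearOrder β] {f : α → β} (hf : StrictMono f) :
    ∀ l : List α, (l.map f).signature = l.signature
  | [] | [_] => rfl
  | a :: b :: l => by
    simp only [map_cons, signature_cons_cons, hf.lt_iff_lt]
    rw [← map_cons, signature_map hf]

theorem signature_ofFn : ∀ {n : ℕ} (f : Fin (n + 1) → α),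
    (ofFn f).signature = ofFn fun i : Fin n => decide (f i.castSucc < f i.succ)
  | 0, _ => rfl
  | n + 1, f => by
    have ih := signature_ofFn fun i => f i.succ
    rw [ofFn_succ] at ih
    rw [ofFn_succ, ofFn_succ, signature_cons_cons, ih, ofFn_succ]
    rfl

theorem signature_append_cons : ∀ (l₁ : List α) (a : α) (l₂ : List α),
    (l₁ ++ a :: l₂).signature = (l₁ ++ [a]).signature ++ (a :: l₂).signature
  | [], _, _ | [_], _, _ => rfl
  | x :: b :: l₁, a, l₂ => by
    rw [cons_append, cons_append, signature_cons_cons, ← cons_append,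
      signature_append_cons (b :: l₁)]
    rfl

theorem signature_append_of_forall_lt {m : α} :
    ∀ {l : List α}, l ≠ [] → (∀ x ∈ l, x < m) → (l ++ [m]).signature = l.signature ++ [true]
  | [_], _, h => by simpa using h
  | x :: b :: l, _, h => by
    rw [cons_append, cons_append, signature_cons_cons, ← cons_append,
      signature_append_of_forall_lt (cons_ne_nil _ _) fun y hy => h y (mem_cons_of_mem _ hy)]
    rfl

theorem signature_cons_of_forall_lt {m : α} {l : List α} (hl : l ≠ []) (h : ∀ x ∈ l, x < m) :
    (m :: l).signature = false :: l.signature := by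
  obtain ⟨b, l, rfl⟩ := exists_cons_of_ne_nil hl
  simpa using (h b mem_cons_self).le

/-- `j ∈ T_u` in the notation of the paper, with positions counted from `0`. -/
def IsPeakSlot (u : List Bool) (j : ℕ) : Prop :=
  (j = 0 ∨ u[j - 1]? = some true) ∧ (j = u.length ∨ u[j]? = some false)

instance (u : List Bool) : DecidablePred u.IsPeakSlot :=
  fun _ => inferInstanceAs (Decidable (_ ∧ _))

theorem signature_append_cons_eq_iff {l₁ l₂ : List α} {m : α} (h₁ : ∀ x ∈ l₁, x < m)
    (h₂ : ∀ x ∈ l₂, x < m) {u : List Bool} (hu : u.length = l₁.length + l₂.length) :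
    (l₁ ++ m :: l₂).signature = u ↔ u.IsPeakSlot l₁.length ∧
      l₁.signature = u.take (l₁.length - 1) ∧ l₂.signature = u.drop (l₁.length + 1) := by
  rw [signature_append_cons]
  rcases eq_or_ne l₁ [] with rfl | hl₁ <;> rcases eq_or_ne l₂ [] with rfl | hl₂
  · rw [length_eq_zero_iff.1 hu]
    simp [IsPeakSlot]
  · rw [signature_cons_of_forall_lt hl₂ h₂]
    obtain ⟨b, u, rfl⟩ := exists_cons_of_ne_nil (l := u) (by rintro rfl; simp_all [eq_comm])
    simp [IsPeakSlot, eq_comm]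
  · rw [signature_append_of_forall_lt hl₁ h₁]
    obtain ⟨u, b, rfl⟩ := (eq_nil_or_concat' u).resolve_left (by rintro rfl; simp_all [eq_comm])
    have hj : l₁.length = u.length + 1 := by simp_all
    simp [IsPeakSlot, hj, append_eq_append_iff_of_size_eq_left, and_comm]
  · rw [signature_append_of_forall_lt hl₁ h₁, signature_cons_of_forall_lt hl₂ h₂]
    obtain ⟨u₁, v, rfl, hlen⟩ : ∃ u₁ v, u = u₁ ++ v ∧ u₁.length = l₁.length - 1 :=
      ⟨_, _, (take_append_drop _ u).symm, length_take_of_le (by omega)⟩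
    have hpos₁ := length_pos_iff.2 hl₁
    have hpos₂ := length_pos_iff.2 hl₂
    obtain ⟨b₁, b₂, u₂, rfl⟩ : ∃ b₁ b₂ u₂, v = b₁ :: b₂ :: u₂ := by
      rcases v with _ | ⟨b₁, _ | ⟨b₂, u₂⟩⟩
      · simp at hu; omega
      · simp at hu; omega
      · exact ⟨b₁, b₂, u₂, rfl⟩
    have hj : l₁.length = u₁.length + 1 := by omega
    simp [IsPeakSlot, hj, append_eq_append_iff_of_size_eq_left, add_assoc, drop_append, and_assoc]
    rw [drop_eq_nil_of_le (by omega), nil_append]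
    tauto

end List

namespace Finset

variable {α : Type*}

def arrangements (s : Finset α) : Finset (List α) :=
  ⟨s.val.lists, Multiset.lists_nodup_finset s⟩

theorem mem_arrangements {s : Finset α} {l : List α} :
    l ∈ s.arrangements ↔ (l : Multiset α) = s.val := by
  rw [arrangements, mem_mk, Multiset.mem_lists_iff, eq_comm, Multiset.quot_mk_to_coe]

theorem length_eq_card_of_mem_arrangements {s : Finset α} {l : List α}
    (h : l ∈ s.arrangements) : l.length = #s := by
  rw [← Multiset.coe_card, mem_arrangements.1 h, card_val]

theorem mem_of_mem_arrangements {s : Finset α} {l : List α} {x : α} (hl : l ∈ s.arrangements)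
    (hx : x ∈ l) : x ∈ s :=
  mem_val.mp (mem_arrangements.1 hl ▸ Multiset.mem_coe.2 hx)

theorem arrangements_empty : (∅ : Finset α).arrangements = {[]} := by
  ext l
  simp [mem_arrangements]

section DecidableEq

variable [DecidableEq α] {s : Finset α} {m : α} {l₁ l₂ : List α}

theorem append_cons_mem_arrangements_iff (hm : m ∈ s) :
    l₁ ++ m :: l₂ ∈ s.arrangements ↔
      ∃ A ⊆ s.erase m, l₁ ∈ A.arrangements ∧ l₂ ∈ (s.erase m \ A).arrangements := by
  simp only [mem_arrangements]
  constructor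
  · intro h
    have hnodup : l₁.Nodup := by
      have := s.nodup
      rw [← h, Multiset.coe_nodup] at this
      exact this.sublist (List.sublist_append_left _ _)
    have hval : l₁.toFinset.val = l₁ := by rw [List.toFinset_val, hnodup.dedup]
    have herase : (s.erase m).val = ↑(l₁ ++ l₂) := by
      rw [erase_val, ← h, Multiset.coe_eq_coe.2 List.perm_middle, ← Multiset.cons_coe,
        Multiset.erase_cons_head]
    refine ⟨l₁.toFinset, val_le_iff.1 ?_, hval.symm, ?_⟩
    · rw [hval, herase, ← Multiset.coe_add]
      exact Multiset.le_add_right _ _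
    · rw [sdiff_val, hval, herase, ← Multiset.coe_add, add_tsub_cancel_left]
  · rintro ⟨A, hA, h₁, h₂⟩
    calc ((l₁ ++ m :: l₂ : List α) : Multiset α) = m ::ₘ (A.val + (s.erase m \ A).val) := by
          rw [← h₁, ← h₂, Multiset.coe_add, Multiset.cons_coe, Multiset.coe_eq_coe]
          exact List.perm_middle
      _ = s.val := by
          rw [sdiff_val, add_tsub_cancel_of_le (val_le_iff.2 hA), erase_val,
            Multiset.cons_erase (mem_val.mpr hm)]

end DecidableEq

variable [LinearOrder α] {β : Type*} [LinearOrder β]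

def arrangementsWithSignature (s : Finset α) (u : List Bool) : Finset (List α) :=
  {l ∈ s.arrangements | l.signature = u}

theorem card_arrangementsWithSignature_map (f : α ↪o β) (s : Finset α) (u : List Bool) :
    #((s.map f.toEmbedding).arrangementsWithSignature u) = #(s.arrangementsWithSignature u) := by
  symm
  refine card_bij (fun l _ => l.map f) (fun l hl => ?_) (fun l₁ _ l₂ _ h => ?_) fun l' hl' => ?_
  · simp only [arrangementsWithSignature, mem_filter, mem_arrangements] at hl ⊢
    rw [List.signature_map f.strictMono, map_val, ← hl.1, Multiset.map_coe]
    exact ⟨rfl, hl.2⟩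
  · exact List.map_injective_iff.2 f.injective h
  · simp only [arrangementsWithSignature, mem_filter, mem_arrangements] at hl'
    obtain ⟨l, rfl⟩ : l' ∈ Set.range (List.map f) := by
      rw [Set.range_list_map]
      intro x hx
      have hx : x ∈ s.map f.toEmbedding := mem_val.mp (hl'.1 ▸ Multiset.mem_coe.2 hx)
      obtain ⟨a, -, rfl⟩ := mem_map.1 hx
      exact ⟨a, rfl⟩
    refine ⟨l, ?_, rfl⟩
    simp only [arrangementsWithSignature, mem_filter, mem_arrangements]
    rw [List.signature_map f.strictMono] at hl'
    refine ⟨Multiset.map_injective f.injective ?_, hl'.2⟩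
    rw [Multiset.map_coe, hl'.1, map_val]
    rfl

theorem ofFn_mem_arrangementsWithSignature_univ_iff {u : List Bool}
    (π : Equiv.Perm (Fin (u.length + 1))) :
    List.ofFn π ∈ (univ : Finset (Fin (u.length + 1))).arrangementsWithSignature u ↔
      ∀ i : Fin u.length, (u.get i = true ↔ π i.castSucc < π i.succ) := by
  have hmem : List.ofFn π ∈ univ.arrangements := by
    rw [mem_arrangements, ← Fin.univ_val_map, Multiset.map_univ_val_equiv]
  simp only [arrangementsWithSignature, mem_filter, hmem, true_and, List.signature_ofFn]
  conv_lhs => rhs; rw [← List.ofFn_get u]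
  rw [List.ofFn_inj, funext_iff]
  exact forall_congr' fun i => by rw [Bool.eq_iff_iff, decide_eq_true_iff]; exact iff_comm

theorem card_arrangementsWithSignature_univ (u : List Bool) :
    #((univ : Finset (Fin (u.length + 1))).arrangementsWithSignature u) = sigCount u := by
  rw [sigCount, Nat.card_eq_fintype_card, Fintype.card_subtype]
  symm
  refine card_bij (fun π _ => List.ofFn π)
    (fun π hπ => (ofFn_mem_arrangementsWithSignature_univ_iff π).2 (mem_filter.1 hπ).2)
    (fun π _ σ _ h => Equiv.coe_inj.1 (List.ofFn_injective h)) fun l hl => ?_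
  have hl' := (mem_filter.1 hl).1
  have hlen : l.length = u.length + 1 := by
    rw [length_eq_card_of_mem_arrangements hl', card_univ, Fintype.card_fin]
  let f : Fin (u.length + 1) → Fin (u.length + 1) := fun i => l[i.1]'(i.2.trans_eq hlen.symm)
  have hfl : List.ofFn f = l :=
    List.ext_getElem (by simp [hlen]) fun i _ _ => by simp only [f, List.getElem_ofFn]
  have hinj : Function.Injective f := by
    rw [← List.nodup_ofFn, hfl, ← Multiset.coe_nodup, mem_arrangements.1 hl']
    exact univ.nodup
  refine ⟨Equiv.ofBijective f (Finite.injective_iff_bijective.1 hinj),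
    mem_filter.2 ⟨mem_univ _, ?_⟩, hfl⟩
  exact (ofFn_mem_arrangementsWithSignature_univ_iff _).1 (by rwa [Equiv.coe_ofBijective, hfl])

/-- Since `#s - 1` truncates, this also covers `s = ∅`, whose only arrangement has the empty
signature. -/
theorem card_arrangementsWithSignature (s : Finset α) (u : List Bool) (h : #s - 1 = u.length) :
    #(s.arrangementsWithSignature u) = sigCount u := by
  rcases s.eq_empty_or_nonempty with rfl | hs
  · obtain rfl : u = [] := List.eq_nil_of_length_eq_zero (by simpa using h.symm)
    simp [arrangementsWithSignature, arrangements_empty, filter_singleton, sigCount]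
  · have hcard : #s = u.length + 1 := by have := hs.card_pos; omega
    rw [← card_arrangementsWithSignature_univ, ← s.map_orderEmbOfFin_univ hcard,
      card_arrangementsWithSignature_map]

theorem append_cons_mem_arrangementsWithSignature_iff {s : Finset α} {m : α} (hm : m ∈ s)
    (hmax : ∀ x ∈ s, x ≤ m) {u : List Bool} (hu : u.length + 1 = #s) {l₁ l₂ : List α} :
    l₁ ++ m :: l₂ ∈ s.arrangementsWithSignature u ↔ ∃ A ⊆ s.erase m, u.IsPeakSlot #A ∧
      l₁ ∈ A.arrangementsWithSignature (u.take (#A - 1)) ∧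
      l₂ ∈ (s.erase m \ A).arrangementsWithSignature (u.drop (#A + 1)) := by
  have hlt {A : Finset α} (hA : A ⊆ s.erase m) {l : List α} (hl : l ∈ A.arrangements) :
      ∀ x ∈ l, x < m := fun x hx => by
    have hx := hA (mem_of_mem_arrangements hl hx)
    exact (hmax x (mem_of_mem_erase hx)).lt_of_ne (ne_of_mem_erase hx)
  simp only [arrangementsWithSignature, mem_filter, append_cons_mem_arrangements_iff hm]
  constructor
  · rintro ⟨⟨A, hA, hl₁, hl₂⟩, hsig⟩
    have hlen : u.length = l₁.length + l₂.length := by simp [← hsig]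
    rw [List.signature_append_cons_eq_iff (hlt hA hl₁) (hlt sdiff_subset hl₂) hlen,
      length_eq_card_of_mem_arrangements hl₁] at hsig
    exact ⟨A, hA, hsig.1, ⟨hl₁, hsig.2.1⟩, hl₂, hsig.2.2⟩
  · rintro ⟨A, hA, hpeak, ⟨hl₁, hsig₁⟩, hl₂, hsig₂⟩
    have hlen : u.length = l₁.length + l₂.length := by
      have := card_le_card hA
      rw [card_erase_of_mem hm] at this
      rw [length_eq_card_of_mem_arrangements hl₁, length_eq_card_of_mem_arrangements hl₂,
        card_sdiff_of_subset hA, card_erase_of_mem hm]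
      omega
    refine ⟨⟨A, hA, hl₁, hl₂⟩, ?_⟩
    rw [List.signature_append_cons_eq_iff (hlt hA hl₁) (hlt sdiff_subset hl₂) hlen,
      length_eq_card_of_mem_arrangements hl₁]
    exact ⟨hpeak, hsig₁, hsig₂⟩

theorem card_arrangementsWithSignature_eq_sum {s : Finset α} {m : α} (hm : m ∈ s)
    (hmax : ∀ x ∈ s, x ≤ m) {u : List Bool} (hu : u.length + 1 = #s) :
    #(s.arrangementsWithSignature u) = ∑ A ∈ (s.erase m).powerset,
      if u.IsPeakSlot #A then
        #(A.arrangementsWithSignature (u.take (#A - 1))) *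
          #((s.erase m \ A).arrangementsWithSignature (u.drop (#A + 1)))
      else 0 := by
  simp_rw [← sum_filter, ← card_product, ← card_sigma]
  symm
  refine card_bij (fun x _ => x.2.1 ++ m :: x.2.2) (fun ⟨A, l₁, l₂⟩ hx => ?_) ?_ fun l hl => ?_
  · exact (append_cons_mem_arrangementsWithSignature_iff hm hmax hu).2
      ⟨A, by simpa [and_assoc] using hx⟩
  · rintro ⟨A, l₁, l₂⟩ hx ⟨A', l₁', l₂'⟩ hx' h
    simp only [mem_sigma, mem_filter, mem_powerset, mem_product, arrangementsWithSignature]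
      at hx hx' h
    have hm₁ : m ∉ l₁ := fun h => notMem_erase m s
      (hx.1.1 (mem_of_mem_arrangements hx.2.1.1 h))
    have hm₂ : m ∉ l₂ := fun h => notMem_erase m s
      (sdiff_subset (mem_of_mem_arrangements hx.2.2.1 h))
    obtain ⟨rfl, -, rfl⟩ := (List.append_cons_inj_of_notMem hm₁ hm₂).1 h
    obtain rfl : A = A' :=
      val_inj.1 ((mem_arrangements.1 hx.2.1.1).symm.trans (mem_arrangements.1 hx'.2.1.1))
    rfl
  · obtain ⟨l₁, l₂, rfl⟩ := List.append_of_mem (Multiset.mem_coe.1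
      (mem_arrangements.1 (mem_filter.1 hl).1 ▸ mem_val.mpr hm))
    obtain ⟨A, hA, h⟩ := (append_cons_mem_arrangementsWithSignature_iff hm hmax hu).1 hl
    exact ⟨⟨A, l₁, l₂⟩, by simpa [and_assoc] using ⟨hA, h⟩, rfl⟩

theorem card_arrangementsWithSignature_eq_sum_range {s : Finset α} {m : α} (hm : m ∈ s)
    (hmax : ∀ x ∈ s, x ≤ m) {u : List Bool} (hu : u.length + 1 = #s) :
    #(s.arrangementsWithSignature u) = ∑ j ∈ range (u.length + 1),
      if u.IsPeakSlot j then
        u.length.choose j * sigCount (u.take (j - 1)) * sigCount (u.drop (j + 1))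
      else 0 := by
  have hrest : #(s.erase m) = u.length := by rw [card_erase_of_mem hm]; omega
  let g (j : ℕ) := if u.IsPeakSlot j then sigCount (u.take (j - 1)) * sigCount (u.drop (j + 1))
    else 0
  calc _ = ∑ A ∈ (s.erase m).powerset, g #A := by
        rw [card_arrangementsWithSignature_eq_sum hm hmax hu]
        refine sum_congr rfl fun A hA => ?_
        have hsub := mem_powerset.1 hA
        have hle := card_le_card hsub
        rw [card_arrangementsWithSignature _ _ (by simp; omega),
          card_arrangementsWithSignature _ _ (by simp [card_sdiff_of_subset hsub]; omega)]
    _ = _ := by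
        rw [sum_powerset_apply_card, hrest]
        refine sum_congr rfl fun j _ => ?_
        simp only [g, smul_eq_mul, mul_ite, mul_zero, mul_assoc]

end Finset

/-- Recursion for the number of permutations with a given signature, obtained by
conditioning on the (0-based) position `j` of the maximal element `n+1`; `j` ranges over
the set `T_u` of positions with (`j = 0` or `u_{j-1} = 1`) and (`j = n` or `u_j = 0`). -/
theorem sigCount_recursion_max (u : List Bool) :
    sigCount u = ∑ j ∈ Finset.range (u.length + 1),
      if (j = 0 ∨ u[j - 1]? = some true) ∧ (j = u.length ∨ u[j]? = some false) then
        (u.length).choose j * sigCount (u.take (j - 1)) * sigCount (u.drop (j + 1))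
      else 0 := by
  rw [← Finset.card_arrangementsWithSignature_univ]
  exact Finset.card_arrangementsWithSignature_eq_sum_range (Finset.mem_univ _)
    (fun x _ => Fin.le_last x) (by simp)
end

section
/- Let $T_u$ and $U_u$ be the set of positions of 'descent-top' and 'ascent-top' slots of a binary string $u \in \{0,1\}^n$, i.e., $T_u = \{i \in [n+1] : (i=1 \text{ or } u_{i-1}=1) \text{ and } (i=n+1 \text{ or } u_i=0)\}$ and $U_u = \{i \in [n+1] : (i=1 \text{ or } u_{i-1}=0) \text{ and } (i=n+1 \text{ or } u_i=1)\}$. Then the count $|\Sigma_u|$ of permutations of $[n+1]$ with signature $u$ satisfies both $|\Sigma_u| = \sum_{i\in T_u} \binom{n}{i-1}|\Sigma_{u_1^{i-2}}||\Sigma_{u_{i+1}^n}|$ and $|\Sigma_u| = \sum_{i\in U_u} \binom{n}{i-1}|\Sigma_{u_1^{i-2}}||\Sigma_{u_{i+1}^n}|$. -/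
/-!
Removing the maximum of a permutation with signature `u` from (0-based) position `j` leaves a
left word of length `j` with signature `u.take (j - 1)` and a right word with signature
`u.drop (j + 1)`; the maximum forces an ascent into position `j` and a descent out of it, which
is the condition on `u`. The left word takes its values in a `j`-subset `S` of the remaining
values and the right one in `Sᶜ`. A signature only sees relative order, so both sides are
counted after standardizing: a bijection `Fin a ⊕ Fin b ≃ α` onto a linear order with `a + b`
elements is the same as a subset `S` of size `a` together with two permutations, read through
the increasing enumerations of `S` and of `Sᶜ` (the map is injective, and both sides have
`(a + b)!` elements). The recursion for the minimum follows by reversing the values, which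
negates the signature.
-/

open Equiv Finset

section Signature

variable {α β : Type*} {v : List Bool} {m : ℕ}

/-- Indices are natural numbers so that the empty word (`m = 0`) needs no special case. -/
def HasSignature [LT α] (v : List Bool) {m : ℕ} (f : Fin m → α) : Prop :=
  ∀ (i : ℕ) (hi : i + 1 < m), v[i]? = some true ↔ f ⟨i, by omega⟩ < f ⟨i + 1, hi⟩

theorem StrictMono.hasSignature_comp_iff [LinearOrder α] [Preorder β] {g : α → β}
    (hg : StrictMono g) {f : Fin m → α} : HasSignature v (g ∘ f) ↔ HasSignature v f := by
  simp only [HasSignature, Function.comp_apply, hg.lt_iff_lt]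

theorem hasSignature_map_not_iff [LinearOrder α] {f : Fin m → α} (hf : Function.Injective f)
    (hm : m ≤ v.length + 1) :
    HasSignature (v.map not) f ↔ HasSignature v (OrderDual.toDual ∘ f) := by
  refine forall_congr' fun i => forall_congr' fun hi => ?_
  have hne : f ⟨i, by omega⟩ ≠ f ⟨i + 1, hi⟩ := hf.ne (by simp)
  rw [List.getElem?_map, List.getElem?_eq_getElem (by omega)]
  rcases hne.lt_or_gt with h | h <;> simp [h, h.not_gt]

noncomputable def permSigCount (v : List Bool) (m : ℕ) : ℕ :=
  Nat.card {σ : Perm (Fin m) // HasSignature v σ}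

theorem permSigCount_eq_sigCount (h : v.length = m - 1) : permSigCount v m = sigCount v := by
  rcases m with _ | m
  · rw [List.length_eq_zero_iff.mp h]
    simp [permSigCount, sigCount, HasSignature]
  · obtain rfl : m = v.length := by omega
    refine Nat.card_congr (subtypeEquivRight fun σ => ⟨fun hσ i => ?_, fun hσ i hi => ?_⟩)
    · have := hσ i (by omega)
      rwa [List.getElem?_eq_getElem i.isLt, Option.some_inj] at this
    · rw [List.getElem?_eq_getElem (by omega), Option.some_inj]
      exact hσ ⟨i, by omega⟩

theorem card_equiv_hasSignature [Fintype α] [LinearOrder α] (h : Fintype.card α = m) :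
    Nat.card {e : Fin m ≃ α // HasSignature v e} = permSigCount v m := by
  let o := monoEquivOfFin α h
  refine (Nat.card_congr ((equivCongr (.refl _) o.toEquiv).subtypeEquiv fun σ => ?_)).symm
  exact o.strictMono.hasSignature_comp_iff.symm

end Signature

section Shuffle

variable {α : Type*} [Fintype α] [LinearOrder α] {a b : ℕ}

theorem card_compl_of_card_add (h : Fintype.card α = a + b) {S : Finset α} (hS : #S = a) :
    #Sᶜ = b := by
  rw [card_compl, hS, h, Nat.add_sub_cancel_left]

noncomputable def shuffleEquiv (h : Fintype.card α = a + b)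
    (x : (Perm (Fin a) × Perm (Fin b)) × {S : Finset α // #S = a}) : Fin a ⊕ Fin b ≃ α :=
  (x.1.1.sumCongr x.1.2).trans (finSumEquivOfFinset x.2.2 (card_compl_of_card_add h x.2.2))

theorem shuffleEquiv_injective (h : Fintype.card α = a + b) :
    Function.Injective (shuffleEquiv h) := by
  rintro ⟨⟨σ, τ⟩, S, hS⟩ ⟨⟨σ', τ'⟩, S', hS'⟩ he
  have hrange (x) : Set.range (shuffleEquiv h x ∘ Sum.inl) = x.2.1 := by
    rw [← range_orderEmbOfFin x.2.1 x.2.2]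
    exact x.1.1.surjective.range_comp (x.2.1.orderEmbOfFin x.2.2)
  have hSS := hrange ((σ, τ), ⟨S, hS⟩)
  rw [he, hrange] at hSS
  obtain rfl : S = S' := by exact_mod_cast hSS.symm
  have hσ : σ = σ' := Equiv.ext fun i =>
    (S.orderEmbOfFin hS).injective (congrArg (· (Sum.inl i)) he)
  have hτ : τ = τ' := Equiv.ext fun k =>
    (Sᶜ.orderEmbOfFin (card_compl_of_card_add h hS)).injective (congrArg (· (Sum.inr k)) he)
  subst hσ hτ
  rfl

theorem shuffleEquiv_bijective (h : Fintype.card α = a + b) :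
    Function.Bijective (shuffleEquiv h) := by
  classical
  refine (Fintype.bijective_iff_injective_and_card _).mpr ⟨shuffleEquiv_injective h, ?_⟩
  rw [Fintype.card_equiv (finSumFinEquiv.trans (Fintype.equivFinOfCardEq h).symm)]
  simp only [Fintype.card_prod, Fintype.card_perm, Fintype.card_fin, Fintype.card_finset_len, h,
    Fintype.card_sum]
  rw [← Nat.choose_mul_factorial_mul_factorial (Nat.le_add_right a b), Nat.add_sub_cancel_left]
  ring

theorem card_sum_equiv_hasSignature {v w : List Bool} (h : Fintype.card α = a + b) :
    Nat.card {e : Fin a ⊕ Fin b ≃ α //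
        HasSignature v (e ∘ Sum.inl) ∧ HasSignature w (e ∘ Sum.inr)} =
      (a + b).choose a * permSigCount v a * permSigCount w b := by
  classical
  let E : {x : (Perm (Fin a) × Perm (Fin b)) × {S : Finset α // #S = a} //
        HasSignature v x.1.1 ∧ HasSignature w x.1.2} ≃
      {e : Fin a ⊕ Fin b ≃ α //
        HasSignature v (e ∘ Sum.inl) ∧ HasSignature w (e ∘ Sum.inr)} :=
    (Equiv.ofBijective _ (shuffleEquiv_bijective h)).subtypeEquiv fun x =>
      and_congr (x.2.1.orderEmbOfFin x.2.2).strictMono.hasSignature_comp_iff.symm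
        (x.2.1ᶜ.orderEmbOfFin
          (card_compl_of_card_add h x.2.2)).strictMono.hasSignature_comp_iff.symm
  rw [Nat.card_congr (E.symm.trans (prodSubtypeFstEquivSubtypeProd.trans
    (prodCongr (subtypeProdEquivProd (p := fun σ : Perm (Fin a) => HasSignature v σ)
      (q := fun τ : Perm (Fin b) => HasSignature w τ)) (.refl {S : Finset α // #S = a}))))]
  simp only [Nat.card_prod, Nat.card_eq_fintype_card (α := {S : Finset α // _}),
    Fintype.card_finset_len, h, permSigCount]
  ring

end Shuffle

section RemoveMax

variable {j n : ℕ}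

def optionFinSumFinEquiv (hj : j ≤ n) : Option (Fin j ⊕ Fin (n - j)) ≃ Fin (n + 1) :=
  (optionCongr (finSumFinEquiv.trans (finCongr (Nat.add_sub_cancel' hj)))).trans
    (finSuccEquiv' ⟨j, by omega⟩).symm

@[simp] theorem optionFinSumFinEquiv_none (hj : j ≤ n) :
    optionFinSumFinEquiv hj none = ⟨j, by omega⟩ := by
  simp [optionFinSumFinEquiv]

@[simp] theorem optionFinSumFinEquiv_some_inl (hj : j ≤ n) (i : Fin j) :
    optionFinSumFinEquiv hj (some (.inl i)) = ⟨i, by omega⟩ := by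
  ext
  simp [optionFinSumFinEquiv, Fin.succAbove, Fin.lt_def]

@[simp] theorem optionFinSumFinEquiv_some_inr (hj : j ≤ n) (k : Fin (n - j)) :
    optionFinSumFinEquiv hj (some (.inr k)) = ⟨j + 1 + k, by omega⟩ := by
  ext
  simp [optionFinSumFinEquiv, Fin.succAbove, Fin.lt_def, Nat.add_right_comm]

def equivApplyEqLast (hj : j ≤ n) :
    (Fin j ⊕ Fin (n - j) ≃ {y : Fin (n + 1) // y ≠ Fin.last n}) ≃
      {π : Perm (Fin (n + 1)) // π ⟨j, by omega⟩ = Fin.last n} :=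
  (optionSubtype (Fin.last n)).symm.trans
    ((equivCongr (optionFinSumFinEquiv hj) (.refl _)).subtypeEquiv fun e => by
      simp only [equivCongr_apply_apply, ← optionFinSumFinEquiv_none hj, symm_apply_apply,
        refl_apply])

theorem equivApplyEqLast_apply_left (hj : j ≤ n) (g) (i : Fin j) :
    (equivApplyEqLast hj g : Perm (Fin (n + 1))) ⟨i, by omega⟩ = g (.inl i) := by
  rw [← optionFinSumFinEquiv_some_inl hj]
  simp only [equivApplyEqLast, trans_apply, subtypeEquiv_apply, equivCongr_apply_apply,
    symm_apply_apply, refl_apply, optionSubtype_symm_apply_apply_some]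

theorem equivApplyEqLast_apply_right (hj : j ≤ n) (g) (k : Fin (n - j)) :
    (equivApplyEqLast hj g : Perm (Fin (n + 1))) ⟨j + 1 + k, by omega⟩ = g (.inr k) := by
  rw [← optionFinSumFinEquiv_some_inr hj]
  simp only [equivApplyEqLast, trans_apply, subtypeEquiv_apply, equivCongr_apply_apply,
    symm_apply_apply, refl_apply, optionSubtype_symm_apply_apply_some]

theorem hasSignature_iff_of_forall_lt {α : Type*} [Preorder α] {u : List Bool}
    (hj : j ≤ u.length) {f : Fin (u.length + 1) → α}
    (hf : ∀ x, x ≠ ⟨j, by omega⟩ → f x < f ⟨j, by omega⟩) :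
    HasSignature u f ↔
      ((j = 0 ∨ u[j - 1]? = some true) ∧ (j = u.length ∨ u[j]? = some false)) ∧
        HasSignature (u.take (j - 1)) (fun i : Fin j => f ⟨i, by omega⟩) ∧
        HasSignature (u.drop (j + 1))
          (fun k : Fin (u.length - j) => f ⟨j + 1 + k, by omega⟩) := by
  have ascent_into (i : ℕ) (hi : i + 1 = j) : f ⟨i, by omega⟩ < f ⟨i + 1, by omega⟩ := by
    subst hi
    exact hf _ (by simp)
  have descent_from (hi : j + 1 < u.length + 1) : ¬ f ⟨j, by omega⟩ < f ⟨j + 1, hi⟩ :=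
    lt_asymm (hf _ (by simp))
  have eq_false_iff (hi : j < u.length) : u[j]? = some false ↔ ¬ u[j]? = some true := by
    rw [List.getElem?_eq_getElem hi]
    simp
  constructor
  · intro hu
    refine ⟨⟨or_iff_not_imp_left.mpr fun h0 => ?_, or_iff_not_imp_left.mpr fun hn => ?_⟩,
      fun i hi => ?_, fun k hk => ?_⟩
    · exact (hu (j - 1) (by omega)).mpr (ascent_into _ (by omega))
    · exact (eq_false_iff (by omega)).mpr fun ht => descent_from _ ((hu j (by omega)).mp ht)
    · rw [List.getElem?_take_of_lt (by omega)]
      exact hu i (by omega)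
    · rw [List.getElem?_drop]
      exact hu (j + 1 + k) (by omega)
  · rintro ⟨⟨hl, hr⟩, hL, hR⟩ i hi
    rcases lt_trichotomy (i + 1) j with h | rfl | h
    · have := hL i h
      rwa [List.getElem?_take_of_lt (by omega)] at this
    · exact iff_of_true (by simpa using hl) (ascent_into i rfl)
    · obtain rfl | h := (Nat.lt_succ_iff.mp h).eq_or_lt
      · exact iff_of_false ((eq_false_iff (by omega)).mp (hr.resolve_left (by omega)))
          (descent_from hi)
      · obtain ⟨k, rfl⟩ : ∃ k, i = j + 1 + k := ⟨i - j - 1, by omega⟩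
        have := hR k (by omega)
        rwa [List.getElem?_drop] at this

theorem hasSignature_equivApplyEqLast_iff {u : List Bool} (hj : j ≤ u.length)
    (g : Fin j ⊕ Fin (u.length - j) ≃ {y : Fin (u.length + 1) // y ≠ Fin.last _}) :
    HasSignature u (equivApplyEqLast hj g : Perm (Fin (u.length + 1))) ↔
      ((j = 0 ∨ u[j - 1]? = some true) ∧ (j = u.length ∨ u[j]? = some false)) ∧
        HasSignature (u.take (j - 1)) (g ∘ Sum.inl) ∧
        HasSignature (u.drop (j + 1)) (g ∘ Sum.inr) := by
  have hcoe := Subtype.strictMono_coe (· ≠ Fin.last u.length)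
  rw [hasSignature_iff_of_forall_lt hj, ← hcoe.hasSignature_comp_iff (f := g ∘ Sum.inl),
    ← hcoe.hasSignature_comp_iff (f := g ∘ Sum.inr)]
  · simp only [equivApplyEqLast_apply_left, equivApplyEqLast_apply_right]
    rfl
  · have hmax (π : Perm (Fin (u.length + 1))) (hπ : π ⟨j, by omega⟩ = Fin.last _) (x)
        (hx : x ≠ ⟨j, by omega⟩) : π x < π ⟨j, by omega⟩ := by
      rw [hπ, Fin.lt_last_iff_ne_last, ← hπ]
      exact π.injective.ne hx
    exact hmax _ (equivApplyEqLast hj g).2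

theorem card_eq_sum_card_symm_last (P : Perm (Fin (n + 1)) → Prop) :
    Nat.card {π // P π} =
      ∑ j ∈ range (n + 1), Nat.card {π : Perm (Fin (n + 1)) //
        (π.symm (Fin.last n) : ℕ) = j ∧ P π} := by
  classical
  simp only [Nat.card_eq_fintype_card, Fintype.card_subtype]
  rw [card_eq_sum_card_fiberwise (f := fun π => (π.symm (Fin.last n) : ℕ)) (t := range (n + 1))
    fun π _ => mem_range.mpr (Fin.is_lt _)]
  simp [filter_filter, and_comm]

theorem card_hasSignature_symm_last_eq {u : List Bool} (hj : j ≤ u.length) :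
    Nat.card {π : Perm (Fin (u.length + 1)) //
        (π.symm (Fin.last _) : ℕ) = j ∧ HasSignature u π} =
      if (j = 0 ∨ u[j - 1]? = some true) ∧ (j = u.length ∨ u[j]? = some false) then
        u.length.choose j * permSigCount (u.take (j - 1)) j *
          permSigCount (u.drop (j + 1)) (u.length - j)
      else 0 := by
  have hlast (π : Perm (Fin (u.length + 1))) :
      (π.symm (Fin.last _) : ℕ) = j ↔ π ⟨j, by omega⟩ = Fin.last _ := by
    rw [eq_comm (b := Fin.last _), ← symm_apply_eq, Fin.ext_iff]
  rw [Nat.card_congr ((subtypeEquivRight fun π => and_congr_left' (hlast π)).trans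
    ((subtypeSubtypeEquivSubtypeInter _ _).symm.trans
      ((equivApplyEqLast hj).subtypeEquivOfSubtype).symm))]
  split_ifs with hb
  · rw [Nat.card_congr (subtypeEquivRight fun g =>
        (hasSignature_equivApplyEqLast_iff hj g).trans (and_iff_right hb)),
      card_sum_equiv_hasSignature (by simp [Fintype.card_subtype_compl, Nat.add_sub_cancel' hj]),
      Nat.add_sub_cancel' hj]
  · exact Nat.card_eq_zero.mpr
      (.inl ⟨fun g => hb ((hasSignature_equivApplyEqLast_iff hj g.1).mp g.2).1⟩)

end RemoveMax

theorem sigCount_eq_sum_max (u : List Bool) :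
    sigCount u = ∑ j ∈ range (u.length + 1),
      if (j = 0 ∨ u[j - 1]? = some true) ∧ (j = u.length ∨ u[j]? = some false) then
        u.length.choose j * sigCount (u.take (j - 1)) * sigCount (u.drop (j + 1))
      else 0 := by
  rw [← permSigCount_eq_sigCount (m := u.length + 1) rfl, permSigCount,
    card_eq_sum_card_symm_last]
  refine sum_congr rfl fun j hj => ?_
  have hj : j ≤ u.length := Nat.lt_succ_iff.mp (mem_range.mp hj)
  rw [card_hasSignature_symm_last_eq hj, permSigCount_eq_sigCount (by rw [List.length_take]; omega),
    permSigCount_eq_sigCount (by rw [List.length_drop]; omega)]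

theorem sigCount_map_not (u : List Bool) : sigCount (u.map not) = sigCount u := by
  rw [← permSigCount_eq_sigCount (m := u.length + 1) (by simp),
    ← permSigCount_eq_sigCount (m := u.length + 1) rfl, permSigCount,
    ← card_equiv_hasSignature (α := (Fin (u.length + 1))ᵒᵈ) (by simp)]
  exact Nat.card_congr ((equivCongr (.refl _) OrderDual.toDual).subtypeEquiv fun σ =>
    hasSignature_map_not_iff σ.injective (by simp))

/-- The number of permutations with signature `u` satisfies two recursions: one summing
over the set `T_u` of valid (0-based) positions `j` for the maximal element, and one
summing over the set `U_u` of valid positions for the minimal element. -/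
theorem sigCount_recursion_max_and_min (u : List Bool) :
    (sigCount u = ∑ j ∈ Finset.range (u.length + 1),
      if (j = 0 ∨ u[j - 1]? = some true) ∧ (j = u.length ∨ u[j]? = some false) then
        (u.length).choose j * sigCount (u.take (j - 1)) * sigCount (u.drop (j + 1))
      else 0) ∧
    (sigCount u = ∑ j ∈ Finset.range (u.length + 1),
      if (j = 0 ∨ u[j - 1]? = some false) ∧ (j = u.length ∨ u[j]? = some true) then
        (u.length).choose j * sigCount (u.take (j - 1)) * sigCount (u.drop (j + 1))
      else 0) := by
  refine ⟨sigCount_eq_sum_max u, ?_⟩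
  rw [← sigCount_map_not, sigCount_eq_sum_max]
  simp [List.getElem?_map, sigCount_map_not, ← List.map_take, ← List.map_drop]
end

section
/- Let $\delta_0, \delta_1 \in [0,1]$ with $\delta_0+\delta_1>0$ and let $A$ be the $4\times 4$ real matrix $A=\begin{pmatrix}-2\delta_0 & 1-\delta_0 & \delta_1 & 0\\ \delta_0 & -1 & 0 & \delta_1\\ \delta_0 & 0 & -1 & \delta_1\\ 0 & \delta_0 & 1-\delta_1 & -2\delta_1\end{pmatrix}$. Then the vector $v = \big((1-\delta_0+\delta_1)\delta_1,\ 2\delta_0\delta_1,\ 2\delta_0\delta_1,\ (1-\delta_1+\delta_0)\delta_0\big)^T$ satisfies $Av = 0$, and the entries of $\frac{1}{(1+\delta_0+\delta_1)(\delta_0+\delta_1)} v$ sum to $1$. -/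
theorem tandem_pair_frequency_stationary_general (δ0 δ1 : ℝ)
    (hpos : 0 < δ0 + δ1) :
    (Matrix.mulVec
      !![-2 * δ0, 1 - δ0, δ1, 0;
         δ0, -1, 0, δ1;
         δ0, 0, -1, δ1;
         0, δ0, 1 - δ1, -2 * δ1]
      ![(1 - δ0 + δ1) * δ1, 2 * δ0 * δ1, 2 * δ0 * δ1, (1 - δ1 + δ0) * δ0] = 0) ∧
    (∑ i : Fin 4,
      (1 / ((1 + δ0 + δ1) * (δ0 + δ1))) *
        ![(1 - δ0 + δ1) * δ1, 2 * δ0 * δ1, 2 * δ0 * δ1, (1 - δ1 + δ0) * δ0] i = 1) := by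
  have hmass : (1 - δ0 + δ1) * δ1 + 2 * δ0 * δ1 + 2 * δ0 * δ1 + (1 - δ1 + δ0) * δ0
      = (1 + δ0 + δ1) * (δ0 + δ1) := by ring
  have hmass_ne : (1 + δ0 + δ1) * (δ0 + δ1) ≠ 0 := by
    have : 0 < 1 + δ0 + δ1 := by linarith
    positivity
  refine ⟨?_, ?_⟩
  · ext i
    fin_cases i <;>
      simp only [Matrix.mulVec, dotProduct, Fin.sum_univ_four, Matrix.of_apply, Matrix.cons_val,
        Matrix.cons_val_zero, Matrix.cons_val_one, Fin.reduceFinMk, Fin.zero_eta, Fin.mk_one,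
        Fin.isValue, Pi.zero_apply] <;> ring
  · rw [← Finset.mul_sum, Fin.sum_univ_four]
    simp only [Matrix.cons_val]
    rw [hmass, one_div_mul_cancel hmass_ne]

theorem tandem_pair_frequency_stationary (δ0 δ1 : ℝ)
    (h0 : δ0 ∈ Set.Icc (0:ℝ) 1) (h1 : δ1 ∈ Set.Icc (0:ℝ) 1) (hpos : 0 < δ0 + δ1) :
    (Matrix.mulVec
      !![-2 * δ0, 1 - δ0, δ1, 0;
         δ0, -1, 0, δ1;
         δ0, 0, -1, δ1;
         0, δ0, 1 - δ1, -2 * δ1]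
      ![(1 - δ0 + δ1) * δ1, 2 * δ0 * δ1, 2 * δ0 * δ1, (1 - δ1 + δ0) * δ0] = 0) ∧
    (∑ i : Fin 4,
      (1 / ((1 + δ0 + δ1) * (δ0 + δ1))) *
        ![(1 - δ0 + δ1) * δ1, 2 * δ0 * δ1, 2 * δ0 * δ1, (1 - δ1 + δ0) * δ0] i = 1) :=
  tandem_pair_frequency_stationary_general δ0 δ1 hpos
end
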